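/- For any ρ > 0 and t ∈ ℝ, the theta-like function g_{ρ²}(t) := Σ_{x∈ℤ} exp(−(x−t)²/(2ρ²)) satisfies g_{ρ²}(0) − g_{ρ²}(t) ≤ 4·(e^{−2π²ρ²}/(1 − e^{−6π²ρ²}))·g_{ρ²}(0), and hence 1 − 4·e^{−2π²ρ²}/(1−e^{−6π²ρ²}) ≤ g_{ρ²}(t)/g_{ρ²}(0) ≤ 1. -/

import Mathlib

/-- The theta-like function `g_{ρ²}(t) = Σ_{x∈ℤ} exp(−(x−t)²/(2ρ²))`. -/
noncomputable def thetaG (ρ : ℝ) (t : ℝ) : ℝ := ∑' x : ℤ, Real.exp (-((x : ℝ) - t) ^ 2 / (2 * ρ ^ 2))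

/-!
Poisson summation turns `g_{ρ²}(t)` into `√(2πρ²) (1 + 2 Σ_{n ≥ 1} e^{-Kn²} cos 2πnt)` with
`K = 2π²ρ²`. Bounding each `1 - cos` by `2` gives `g(0) - g(t) ≤ 4 √(2πρ²) Σ_{n ≥ 1} e^{-Kn²}`;
since `(m + 1)² ≥ 1 + 3m`, this tail is at most the geometric series `e^{-K} Σ_m e^{-3Km}`, and
`√(2πρ²) ≤ g(0)` because all terms of the Fourier side at `t = 0` are positive.
-/

open Real

lemma exp_neg_mul_add_one_sq_le {K : ℝ} (hK : 0 ≤ K) (n : ℕ) :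
    rexp (-K * ((n : ℝ) + 1) ^ 2) ≤ rexp (-K) * rexp (-3 * K) ^ n := by
  rw [← Real.exp_nat_mul, ← Real.exp_add]
  gcongr
  have : (n : ℝ) ≤ (n : ℝ) ^ 2 := by exact_mod_cast Nat.le_self_pow two_ne_zero n
  nlinarith

lemma summable_exp_neg_mul_add_one_sq {K : ℝ} (hK : 0 < K) :
    Summable fun n : ℕ ↦ rexp (-K * ((n : ℝ) + 1) ^ 2) :=
  .of_nonneg_of_le (fun _ ↦ (exp_pos _).le) (exp_neg_mul_add_one_sq_le hK.le)
    ((summable_geometric_of_lt_one (exp_pos _).le (exp_lt_one_iff.mpr (by linarith))).mul_left _)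

lemma tsum_exp_neg_mul_add_one_sq_le {K : ℝ} (hK : 0 < K) :
    ∑' n : ℕ, rexp (-K * ((n : ℝ) + 1) ^ 2) ≤ rexp (-K) / (1 - rexp (-3 * K)) := by
  have hq : rexp (-3 * K) < 1 := exp_lt_one_iff.mpr (by linarith)
  calc ∑' n : ℕ, rexp (-K * ((n : ℝ) + 1) ^ 2)
      ≤ ∑' n : ℕ, rexp (-K) * rexp (-3 * K) ^ n :=
        (summable_exp_neg_mul_add_one_sq hK).tsum_le_tsum (exp_neg_mul_add_one_sq_le hK.le)
          ((summable_geometric_of_lt_one (exp_pos _).le hq).mul_left _)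
    _ = rexp (-K) / (1 - rexp (-3 * K)) := by
        rw [tsum_mul_left, tsum_geometric_of_lt_one (exp_pos _).le hq, div_eq_mul_inv]

lemma summable_exp_neg_mul_int_sq {K : ℝ} (hK : 0 < K) :
    Summable fun n : ℤ ↦ rexp (-K * (n : ℝ) ^ 2) :=
  .of_add_one_of_neg_add_one (by simpa using summable_exp_neg_mul_add_one_sq hK)
    ((summable_exp_neg_mul_add_one_sq hK).congr fun n ↦ by push_cast; rw [neg_sq])

lemma tsum_int_eq_add_two_mul_tsum_add_one {f : ℤ → ℝ} (hf : f.Even)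
    (hs : Summable fun n : ℕ ↦ f (n + 1)) :
    ∑' n : ℤ, f n = f 0 + 2 * ∑' n : ℕ, f (n + 1) := by
  rw [tsum_of_add_one_of_neg_add_one hs (hs.congr fun n ↦ (hf _).symm)]
  simp only [hf _]
  ring

lemma tsum_exp_neg_pi_mul_sub_sq_div_eq {c : ℝ} (hc : 0 < c) (t : ℝ) :
    ∑' n : ℤ, rexp (-π * ((n : ℝ) - t) ^ 2 / c) =
      √c * ∑' n : ℤ, rexp (-π * c * (n : ℝ) ^ 2) * cos (2 * π * n * t) := by
  have hF : ∀ n : ℤ, Complex.exp (-π * c * n ^ 2 + 2 * π * (Complex.I * t) * n) =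
      rexp (-π * c * n ^ 2) * Complex.exp ((2 * π * n * t : ℝ) * Complex.I) := fun n ↦ by
    push_cast; rw [← Complex.exp_add]; ring_nf
  have hG : ∀ n : ℤ, Complex.exp (-π / c * (n + Complex.I * (Complex.I * t)) ^ 2) =
      (rexp (-π * (n - t) ^ 2 / c) : ℂ) := fun n ↦ by
    push_cast; rw [← mul_assoc, Complex.I_mul_I]; ring_nf
  have hsum : Summable fun n : ℤ ↦
      rexp (-π * c * n ^ 2) * Complex.exp ((2 * π * n * t : ℝ) * Complex.I) := by
    refine .of_norm ((summable_exp_neg_mul_int_sq (by positivity : 0 < π * c)).congr fun n ↦ ?_)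
    rw [norm_mul, Complex.norm_exp_ofReal_mul_I, Complex.norm_real, norm_of_nonneg (exp_pos _).le]
    ring_nf
  have hroot : (c : ℂ) ^ (1 / 2 : ℂ) = (√c : ℝ) := by
    rw [sqrt_eq_rpow, Complex.ofReal_cpow hc.le]; push_cast; rfl
  have h := Complex.tsum_exp_neg_quadratic (a := (c : ℂ)) (by simpa using hc) (Complex.I * t)
  simp only [hF, hG, ← Complex.ofReal_tsum] at h
  rw [hroot, one_div, ← Complex.ofReal_inv] at h
  have hre := congrArg Complex.re h
  simp only [Complex.re_tsum hsum, Complex.re_ofReal_mul, Complex.exp_ofReal_mul_I_re,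
    Complex.ofReal_re] at hre
  rw [hre, mul_inv_cancel_left₀ (sqrt_pos.2 hc).ne']

lemma norm_mul_cos_le {a : ℝ} (ha : 0 ≤ a) (θ : ℝ) : ‖a * cos θ‖ ≤ a := by
  rw [norm_mul, norm_of_nonneg ha]
  exact mul_le_of_le_one_right ha (abs_cos_le_one θ)

lemma abs_tsum_mul_cos_le_tsum {ι : Type*} {a θ : ι → ℝ} (ha : ∀ i, 0 ≤ a i) (hs : Summable a) :
    |∑' i, a i * cos (θ i)| ≤ ∑' i, a i :=
  tsum_of_norm_bounded hs.hasSum fun i ↦ norm_mul_cos_le (ha i) (θ i)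

lemma thetaG_eq_fourier_series (ρ t : ℝ) (hρ : 0 < ρ) :
    thetaG ρ t = √(2 * π * ρ ^ 2) * (1 + 2 * ∑' n : ℕ,
      rexp (-(2 * π ^ 2 * ρ ^ 2) * ((n : ℝ) + 1) ^ 2) * cos (2 * π * ((n : ℝ) + 1) * t)) := by
  set K := 2 * π ^ 2 * ρ ^ 2
  have hK : 0 < K := by positivity
  set f : ℤ → ℝ := fun n ↦ rexp (-K * (n : ℝ) ^ 2) * cos (2 * π * n * t)
  have hf : f.Even := fun n ↦ by
    simp only [f, Int.cast_neg, neg_sq, mul_neg, neg_mul, cos_neg]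
  have hs : Summable fun n : ℕ ↦ f (n + 1) :=
    (summable_exp_neg_mul_add_one_sq hK).of_norm_bounded fun n ↦ by
      simpa [f] using norm_mul_cos_le (exp_pos _).le _
  have hpoisson := tsum_exp_neg_pi_mul_sub_sq_div_eq (by positivity : 0 < 2 * π * ρ ^ 2) t
  calc thetaG ρ t = ∑' n : ℤ, rexp (-π * ((n : ℝ) - t) ^ 2 / (2 * π * ρ ^ 2)) := by
        refine tsum_congr fun n ↦ ?_
        congr 1
        field_simp
    _ = √(2 * π * ρ ^ 2) * ∑' n : ℤ, f n := by
        rw [hpoisson]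
        congr 2 with n
        simp only [f, K]
        ring_nf
    _ = _ := by
        rw [tsum_int_eq_add_two_mul_tsum_add_one hf hs]
        simp [f]

/-- For any `ρ > 0` and `t ∈ ℝ`:
`g_{ρ²}(0) − g_{ρ²}(t) ≤ 4·(e^{−2π²ρ²}/(1 − e^{−6π²ρ²}))·g_{ρ²}(0)`, and hence
`1 − 4·e^{−2π²ρ²}/(1−e^{−6π²ρ²}) ≤ g_{ρ²}(t)/g_{ρ²}(0) ≤ 1`. -/
theorem thetaG_ratio_bounds (ρ t : ℝ) (hρ : 0 < ρ) :
    thetaG ρ 0 - thetaG ρ t ≤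
        4 * (Real.exp (-2 * Real.pi ^ 2 * ρ ^ 2) / (1 - Real.exp (-6 * Real.pi ^ 2 * ρ ^ 2))) *
          thetaG ρ 0 ∧
      1 - 4 * Real.exp (-2 * Real.pi ^ 2 * ρ ^ 2) / (1 - Real.exp (-6 * Real.pi ^ 2 * ρ ^ 2)) ≤
        thetaG ρ t / thetaG ρ 0 ∧
      thetaG ρ t / thetaG ρ 0 ≤ 1 := by
  set K := 2 * π ^ 2 * ρ ^ 2
  have hK : 0 < K := by positivity
  set q := rexp (-K) / (1 - rexp (-3 * K))
  have hq : rexp (-2 * π ^ 2 * ρ ^ 2) / (1 - rexp (-6 * π ^ 2 * ρ ^ 2)) = q := by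
    simp only [q, K]; ring_nf
  rw [mul_div_assoc, hq]
  set S := ∑' n : ℕ, rexp (-K * ((n : ℝ) + 1) ^ 2)
  set C := ∑' n : ℕ, rexp (-K * ((n : ℝ) + 1) ^ 2) * cos (2 * π * ((n : ℝ) + 1) * t)
  set s := √(2 * π * ρ ^ 2)
  have hs : 0 < s := sqrt_pos.2 (by positivity)
  have hg0 : thetaG ρ 0 = s * (1 + 2 * S) := by
    simpa only [mul_zero, cos_zero, mul_one] using thetaG_eq_fourier_series ρ 0 hρ
  have hgt : thetaG ρ t = s * (1 + 2 * C) := thetaG_eq_fourier_series ρ t hρ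
  have hS : 0 ≤ S := tsum_nonneg fun _ ↦ (exp_pos _).le
  have hSq : S ≤ q := tsum_exp_neg_mul_add_one_sq_le hK
  obtain ⟨hCl, hCu⟩ : -S ≤ C ∧ C ≤ S := abs_le.1 <|
    abs_tsum_mul_cos_le_tsum (fun _ ↦ (exp_pos _).le) (summable_exp_neg_mul_add_one_sq hK)
  have hg0_pos : 0 < thetaG ρ 0 := by rw [hg0]; positivity
  have hdiff : thetaG ρ 0 - thetaG ρ t ≤ 4 * q * thetaG ρ 0 :=
    calc thetaG ρ 0 - thetaG ρ t = 2 * s * (S - C) := by rw [hg0, hgt]; ring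
      _ ≤ 2 * s * (2 * q) := by gcongr; linarith
      _ ≤ 4 * q * thetaG ρ 0 := by
          rw [hg0]; nlinarith [mul_nonneg (mul_nonneg (hS.trans hSq) hs.le) hS]
  refine ⟨hdiff, ?_, (div_le_one hg0_pos).2 ?_⟩
  · rw [le_div_iff₀ hg0_pos]
    linarith
  · rw [hg0, hgt]
    gcongr
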